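/- arXiv:2303.15544 — 4 statements merged into one kernel-verified Lean document; each statement's English description precedes it below -/
import Mathlib

section
/- Under the locality assumption, the multi-flow game with collaborative utilities 𝒰_n is an exact potential game with potential φ(σ) = Σ_{n=1}^N u_n(σ): for every flow n, every pair of strategies σ_n^(1), σ_n^(2) ∈ 𝒜_n, and every fixed profile σ_{-n} of the other flows, 𝒰_n(σ_n^(2), σ_{-n}) − 𝒰_n(σ_n^(1), σ_{-n}) = φ(σ_n^(2), σ_{-n}) − φ(σ_n^(1), σ_{-n}). -/
/-- Under the locality assumption, the multi-flow game with
collaborative utilities `U n` is an exact potential game with potential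
`φ σ = ∑ n, u n σ`. -/
theorem exact_potential_game
    (N : ℕ) (A : Fin N → Type) [∀ n, Fintype (A n)] [∀ n, Nonempty (A n)]
    (u : Fin N → (∀ k, A k) → ℝ)
    (Nbr : Fin N → Finset (Fin N))
    (hNbrSelf : ∀ n, n ∉ Nbr n)
    -- locality: a non-neighbor's utility does not depend on flow n's strategy
    (hloc : ∀ (n m : Fin N), m ≠ n → m ∉ Nbr n →
      ∀ (σ : ∀ k, A k) (a b : A n),
        u m (Function.update σ n a) = u m (Function.update σ n b))
    (U : Fin N → (∀ k, A k) → ℝ)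
    (hU : ∀ n σ, U n σ = u n σ + ∑ m ∈ Nbr n, u m σ)
    (φ : (∀ k, A k) → ℝ)
    (hφ : ∀ σ, φ σ = ∑ n, u n σ) :
    ∀ (n : Fin N) (σ : ∀ k, A k) (a b : A n),
      U n (Function.update σ n b) - U n (Function.update σ n a)
        = φ (Function.update σ n b) - φ (Function.update σ n a) := by
  intro n σ a b
  have hUS : ∀ τ, U n τ = ∑ m ∈ insert n (Nbr n), u m τ := by
    intro τ
    rw [hU, Finset.sum_insert (hNbrSelf n)]
  have hφS : ∀ τ, φ τ = ∑ m ∈ insert n (Nbr n), u m τ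
      + ∑ m ∈ (insert n (Nbr n))ᶜ, u m τ := by
    intro τ
    rw [hφ, ← Finset.sum_add_sum_compl (insert n (Nbr n))]
  have hc : ∑ m ∈ (insert n (Nbr n))ᶜ, u m (Function.update σ n b)
      = ∑ m ∈ (insert n (Nbr n))ᶜ, u m (Function.update σ n a) := by
    apply Finset.sum_congr rfl
    intro m hm
    simp only [Finset.mem_compl, Finset.mem_insert, not_or] at hm
    exact hloc n m hm.1 hm.2 σ b a
  rw [hUS, hUS, hφS, hφS, hc]
  ring
end

section
/- In the multi-flow game with collaborative utilities, under the locality assumption, every strategy profile σ that is a unilateral local maximum of the potential function — i.e., φ(σ) ≥ φ(σ_n', σ_{-n}) for every flow n and every alternative strategy σ_n' ∈ 𝒜_n — is a Nash equilibrium: 𝒰_n(σ) ≥ 𝒰_n(σ_n', σ_{-n}) for every flow n and every σ_n' ∈ 𝒜_n. -/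
/-- Under the locality assumption, every strategy profile that is a
unilateral local maximum of the potential `φ σ = ∑ n, u n σ` is a Nash
equilibrium of the collaborative-utility game. -/
theorem potential_local_max_is_nash
    (N : ℕ) (A : Fin N → Type) [∀ n, Fintype (A n)] [∀ n, Nonempty (A n)]
    (u : Fin N → (∀ k, A k) → ℝ)
    (Nbr : Fin N → Finset (Fin N))
    (hNbrSelf : ∀ n, n ∉ Nbr n)
    (hloc : ∀ (n m : Fin N), m ≠ n → m ∉ Nbr n →
      ∀ (σ : ∀ k, A k) (a b : A n),
        u m (Function.update σ n a) = u m (Function.update σ n b))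
    (U : Fin N → (∀ k, A k) → ℝ)
    (hU : ∀ n σ, U n σ = u n σ + ∑ m ∈ Nbr n, u m σ)
    (φ : (∀ k, A k) → ℝ)
    (hφ : ∀ σ, φ σ = ∑ n, u n σ)
    (σ : ∀ k, A k)
    (hmax : ∀ (n : Fin N) (a : A n), φ (Function.update σ n a) ≤ φ σ) :
    ∀ (n : Fin N) (a : A n), U n (Function.update σ n a) ≤ U n σ := by
  intro n a
  have hself : Function.update σ n (σ n) = σ := Function.update_eq_self n σ
  set S : Finset (Fin N) := insert n (Nbr n) with hS
  have hsplit : ∀ τ, φ τ = (∑ m ∈ S, u m τ) + ∑ m ∈ Sᶜ, u m τ := by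
    intro τ
    rw [hφ, ← Finset.sum_add_sum_compl S]
  have hUS : ∀ τ, U n τ = ∑ m ∈ S, u m τ := by
    intro τ
    rw [hU, hS, Finset.sum_insert (hNbrSelf n)]
  have hcompl : ∀ m ∈ Sᶜ, u m (Function.update σ n a) = u m σ := by
    intro m hm
    rw [Finset.mem_compl, hS, Finset.mem_insert, not_or] at hm
    calc u m (Function.update σ n a) = u m (Function.update σ n (σ n)) :=
          hloc n m hm.1 hm.2 σ a (σ n)
      _ = u m σ := by rw [hself]
  have h := hmax n a
  rw [hsplit, hsplit, ← hUS, ← hUS, Finset.sum_congr rfl hcompl] at h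
  linarith
end

section
/- The total probability that the Gibbs distribution assigns to the set Σ* of global maximizers of φ is nondecreasing in the parameter ν: if 0 < ν₁ ≤ ν₂ then Σ_{σ∈Σ*} P_{ν₁}(σ) ≤ Σ_{σ∈Σ*} P_{ν₂}(σ). -/
open Classical in
/-- The total Gibbs probability of the set `Σ*` of global
maximizers of `φ` is nondecreasing in the parameter `ν`. -/
theorem gibbs_maximizers_prob_monotone
    (S : Type) [Fintype S] [Nonempty S] (φ : S → ℝ)
    (P : ℝ → S → ℝ)
    (hP : ∀ (ν : ℝ) (σ : S),
      P ν σ = Real.exp (ν * φ σ) / ∑ σ' : S, Real.exp (ν * φ σ'))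
    (ν₁ ν₂ : ℝ) (hν₁ : 0 < ν₁) (hν₁₂ : ν₁ ≤ ν₂) :
    ∑ σ ∈ Finset.univ.filter (fun σ : S => ∀ σ' : S, φ σ' ≤ φ σ), P ν₁ σ
      ≤ ∑ σ ∈ Finset.univ.filter (fun σ : S => ∀ σ' : S, φ σ' ≤ φ σ), P ν₂ σ := by
  obtain ⟨σ₀, -, hσ₀⟩ := Finset.exists_max_image Finset.univ φ Finset.univ_nonempty
  set M := φ σ₀ with hM
  set A := Finset.univ.filter (fun σ : S => ∀ σ' : S, φ σ' ≤ φ σ) with hA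
  have hmem : ∀ σ ∈ A, φ σ = M := by
    intro σ hσ
    rw [hA, Finset.mem_filter] at hσ
    exact le_antisymm (hσ₀ σ (Finset.mem_univ σ)) (hσ.2 σ₀)
  have hD : ∀ ν : ℝ, 0 < ∑ σ' : S, Real.exp (ν * φ σ') :=
    fun ν => Finset.sum_pos (fun _ _ => Real.exp_pos _) Finset.univ_nonempty
  have hsum : ∀ ν : ℝ, ∑ σ ∈ A, P ν σ =
      (A.card : ℝ) * Real.exp (ν * M) / ∑ σ' : S, Real.exp (ν * φ σ') := by
    intro ν
    simp_rw [hP]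
    rw [← Finset.sum_div]
    congr 1
    rw [Finset.sum_congr rfl (fun σ hσ => by rw [hmem σ hσ]), Finset.sum_const,
      nsmul_eq_mul]
  rw [hsum ν₁, hsum ν₂, div_le_div_iff₀ (hD ν₁) (hD ν₂), mul_assoc, mul_assoc]
  refine mul_le_mul_of_nonneg_left ?_ (Nat.cast_nonneg _)
  rw [Finset.mul_sum, Finset.mul_sum]
  refine Finset.sum_le_sum fun σ _ => ?_
  rw [← Real.exp_add, ← Real.exp_add]
  apply Real.exp_le_exp.mpr
  nlinarith [hσ₀ σ (Finset.mem_univ σ)]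
end

section
/- Under the locality assumption, a strategy profile σ is a Nash equilibrium of the collaborative-utility game (𝒰_n(σ) ≥ 𝒰_n(σ_n', σ_{-n}) for every flow n and every σ_n' ∈ 𝒜_n) if and only if σ is a unilateral local maximum of the potential function φ (φ(σ) ≥ φ(σ_n', σ_{-n}) for every flow n and every σ_n' ∈ 𝒜_n). -/
/-- Under the locality assumption, a strategy profile is a Nash
equilibrium of the collaborative-utility game if and only if it is a
unilateral local maximum of the potential `φ σ = ∑ n, u n σ`. -/
theorem nash_iff_potential_local_max
    (N : ℕ) (A : Fin N → Type) [∀ n, Fintype (A n)] [∀ n, Nonempty (A n)]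
    (u : Fin N → (∀ k, A k) → ℝ)
    (Nbr : Fin N → Finset (Fin N))
    (hNbrSelf : ∀ n, n ∉ Nbr n)
    (hloc : ∀ (n m : Fin N), m ≠ n → m ∉ Nbr n →
      ∀ (σ : ∀ k, A k) (a b : A n),
        u m (Function.update σ n a) = u m (Function.update σ n b))
    (U : Fin N → (∀ k, A k) → ℝ)
    (hU : ∀ n σ, U n σ = u n σ + ∑ m ∈ Nbr n, u m σ)
    (φ : (∀ k, A k) → ℝ)
    (hφ : ∀ σ, φ σ = ∑ n, u n σ)
    (σ : ∀ k, A k) :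
    (∀ (n : Fin N) (a : A n), U n (Function.update σ n a) ≤ U n σ)
      ↔ (∀ (n : Fin N) (a : A n), φ (Function.update σ n a) ≤ φ σ) := by
  have key : ∀ (n : Fin N) (a : A n),
      φ (Function.update σ n a) - φ σ
        = U n (Function.update σ n a) - U n σ := by
    intro n a
    have hUeq : ∀ τ : ∀ k, A k, U n τ = ∑ m ∈ insert n (Nbr n), u m τ := by
      intro τ
      rw [Finset.sum_insert (hNbrSelf n), hU]
    have hsplit : ∀ τ : ∀ k, A k,
        φ τ = ∑ m ∈ insert n (Nbr n), u m τ
          + ∑ m ∈ (insert n (Nbr n))ᶜ, u m τ := by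
      intro τ
      rw [hφ, Finset.sum_add_sum_compl]
    have hrest : ∀ m ∈ (insert n (Nbr n))ᶜ,
        u m (Function.update σ n a) = u m σ := by
      intro m hm
      simp only [Finset.mem_compl, Finset.mem_insert, not_or] at hm
      have := hloc n m hm.1 hm.2 σ a (σ n)
      rwa [Function.update_eq_self] at this
    rw [hsplit, hsplit, hUeq, hUeq, Finset.sum_congr rfl hrest]
    ring
  constructor <;> intro h n a <;> have := h n a <;> have := key n a <;> linarith
end
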